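/- arXiv:math/0308286 — 5 statements merged into one kernel-verified Lean document; each statement's English description precedes it below -/
import Mathlib

section
/- If f: G → ℂ is a nonzero function on a finite abelian group G, then |supp(f)| · |supp(f̂)| ≥ |G|, where f̂ is the Fourier transform of f. -/
/-!
If `f ≠ 0` attains its maximal modulus `M` at `x₀`, the unimodularity of the pairing bounds every
Fourier coefficient by `|supp f| · M / |G|`. Fourier inversion at `x₀` then gives
`M ≤ |supp f̂| · |supp f| · M / |G|`, and cancelling `M > 0` yields `|G| ≤ |supp f| · |supp f̂|`.
-/

open Complex Finset

def AddChar.ofMapAddEqMul {A M : Type*} [AddMonoid A] [MonoidWithZero M]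
    [IsLeftCancelMulZero M] (φ : A → M)
    (hadd : ∀ a b, φ (a + b) = φ a * φ b) (h0 : φ 0 ≠ 0) : AddChar A M where
  toFun := φ
  map_zero_eq_one' := mul_left_cancel₀ h0 (by rw [mul_one, ← hadd, add_zero])
  map_add_eq_mul' := hadd

section Counting

variable {ι κ : Type*} [Fintype ι] [Fintype κ]

lemma norm_sum_mul_le_ncard_support_mul (g c : ι → ℂ) (hc : ∀ i, ‖c i‖ ≤ 1) {M : ℝ}
    (hM : ∀ i, ‖g i‖ ≤ M) : ‖∑ i, g i * c i‖ ≤ (Function.support g).ncard * M := by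
  classical
  rw [Set.ncard_eq_toFinset_card', ← nsmul_eq_mul, ← sum_const]
  calc ‖∑ i, g i * c i‖ ≤ ∑ i, ‖g i‖ := by
        refine (norm_sum_le _ _).trans (sum_le_sum fun i _ => ?_)
        rw [norm_mul]
        exact mul_le_of_le_one_right (norm_nonneg _) (hc i)
    _ = ∑ i ∈ (Function.support g).toFinset, ‖g i‖ :=
        (sum_subset (subset_univ _) fun i _ hi => by simp_all).symm
    _ ≤ ∑ _i ∈ (Function.support g).toFinset, M := sum_le_sum fun i _ => hM i

theorem le_ncard_support_mul_ncard_support (c : ι → κ → ℂ) (d : ι → κ → ℂ)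
    (hc : ∀ x ξ, ‖c x ξ‖ ≤ 1) (hd : ∀ x ξ, ‖d x ξ‖ ≤ 1) {N : ℝ} (hN : 0 < N)
    {f : ι → ℂ} (hf : f ≠ 0) {fhat : κ → ℂ} (hinv : ∀ x, f x = ∑ ξ, fhat ξ * c x ξ)
    (hfhat : ∀ ξ, fhat ξ = (N : ℂ)⁻¹ * ∑ x, f x * d x ξ) :
    N ≤ (Function.support f).ncard * (Function.support fhat).ncard := by
  obtain ⟨x₁, hx₁⟩ := Function.ne_iff.1 hf
  obtain ⟨x₀, -, hx₀⟩ := exists_max_image univ (‖f ·‖) ⟨x₁, mem_univ x₁⟩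
  have hmax : ∀ x, ‖f x‖ ≤ ‖f x₀‖ := fun x => hx₀ x (mem_univ x)
  have hpos : 0 < ‖f x₀‖ := (norm_pos_iff.2 hx₁).trans_le (hmax x₁)
  have hfhat_le : ∀ ξ, ‖fhat ξ‖ ≤ N⁻¹ * ((Function.support f).ncard * ‖f x₀‖) := by
    intro ξ
    rw [hfhat, norm_mul, norm_inv, norm_real, Real.norm_of_nonneg hN.le]
    gcongr
    exact norm_sum_mul_le_ncard_support_mul _ _ (hd · ξ) hmax
  have hf_le : ‖f x₀‖ ≤ (Function.support fhat).ncard *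
      (N⁻¹ * ((Function.support f).ncard * ‖f x₀‖)) :=
    calc ‖f x₀‖ = ‖∑ ξ, fhat ξ * c x₀ ξ‖ := by rw [← hinv]
      _ ≤ _ := norm_sum_mul_le_ncard_support_mul _ _ (hc x₀) hfhat_le
  refine le_of_mul_le_mul_right ?_ hpos
  calc N * ‖f x₀‖ ≤ N * ((Function.support fhat).ncard *
        (N⁻¹ * ((Function.support f).ncard * ‖f x₀‖))) := by gcongr
    _ = (Function.support f).ncard * (Function.support fhat).ncard * ‖f x₀‖ := by
        field_simp

end Counting

section Pairing

variable {G : Type*} [AddCommGroup G] [Fintype G] {e : G → G → ℂ}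

noncomputable def dft (e : G → G → ℂ) (f : G → ℂ) (ξ : G) : ℂ :=
  (Fintype.card G : ℂ)⁻¹ * ∑ x, f x * (starRingEnd ℂ) (e x ξ)

lemma conj_pairing_eq_neg_left (habs : ∀ x ξ, ‖e x ξ‖ = 1)
    (hmul₁ : ∀ x x' ξ, e (x + x') ξ = e x ξ * e x' ξ) (x ξ : G) :
    (starRingEnd ℂ) (e x ξ) = e (-x) ξ :=
  (AddChar.map_neg_eq_conj (AddChar.ofMapAddEqMul (e · ξ) (hmul₁ · · ξ)
    (ne_zero_of_norm_ne_zero (by simp [habs]))) x).symm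

lemma sum_pairing_eq_ite (habs : ∀ x ξ, ‖e x ξ‖ = 1)
    (hmul₁ : ∀ x x' ξ, e (x + x') ξ = e x ξ * e x' ξ)
    (hmul₂ : ∀ x ξ ξ', e x (ξ + ξ') = e x ξ * e x ξ')
    (hnd₁ : ∀ x : G, x ≠ 0 → ∃ ξ : G, e x ξ ≠ 1) [DecidableEq G] (z : G) :
    ∑ ξ, e z ξ = if z = 0 then (Fintype.card G : ℂ) else 0 := by
  have hne : ∀ x ξ, e x ξ ≠ 0 := fun x ξ => ne_zero_of_norm_ne_zero (by simp [habs])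
  split_ifs with hz
  · have h0 : ∀ ξ, e 0 ξ = 1 := fun ξ =>
      (AddChar.ofMapAddEqMul (e · ξ) (hmul₁ · · ξ) (hne 0 ξ)).map_zero_eq_one
    simp [hz, h0]
  · let ψ := AddChar.ofMapAddEqMul (e z ·) (hmul₂ z) (hne z 0)
    exact AddChar.sum_eq_zero_iff_ne_zero (ψ := ψ) |>.2 (AddChar.ne_zero_iff.2 (hnd₁ z hz))

lemma sum_dft_mul_eq (habs : ∀ x ξ, ‖e x ξ‖ = 1)
    (hmul₁ : ∀ x x' ξ, e (x + x') ξ = e x ξ * e x' ξ)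
    (hmul₂ : ∀ x ξ ξ', e x (ξ + ξ') = e x ξ * e x ξ')
    (hnd₁ : ∀ x : G, x ≠ 0 → ∃ ξ : G, e x ξ ≠ 1) (f : G → ℂ) (x : G) :
    ∑ ξ, dft e f ξ * e x ξ = f x := by
  classical
  have hkernel : ∀ y ξ, (starRingEnd ℂ) (e y ξ) * e x ξ = e (x - y) ξ := fun y ξ => by
    rw [conj_pairing_eq_neg_left habs hmul₁, sub_eq_neg_add, hmul₁]
  calc ∑ ξ, dft e f ξ * e x ξ
      = (Fintype.card G : ℂ)⁻¹ * ∑ y, f y * ∑ ξ, e (x - y) ξ := by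
        simp only [dft, mul_sum, sum_mul, mul_assoc, ← hkernel]
        exact sum_comm
    _ = (Fintype.card G : ℂ)⁻¹ * (f x * Fintype.card G) := by
        simp [sum_pairing_eq_ite habs hmul₁ hmul₂ hnd₁, sub_eq_zero]
    _ = f x := by
        field_simp

end Pairing

theorem uncertainty_principle_finite_abelian_general
    {G : Type*} [AddCommGroup G] [Fintype G]
    (e : G → G → ℂ)
    (habs : ∀ x ξ, ‖e x ξ‖ = 1)
    (hmul₁ : ∀ x x' ξ, e (x + x') ξ = e x ξ * e x' ξ)
    (hmul₂ : ∀ x ξ ξ', e x (ξ + ξ') = e x ξ * e x ξ')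
    (hnd₁ : ∀ x : G, x ≠ 0 → ∃ ξ : G, e x ξ ≠ 1)
    (f : G → ℂ) (hf : f ≠ 0)
    (fhat : G → ℂ)
    (hfhat : ∀ ξ, fhat ξ = (Fintype.card G : ℂ)⁻¹ * ∑ x : G, f x * (starRingEnd ℂ) (e x ξ)) :
    (Function.support f).ncard * (Function.support fhat).ncard ≥ Fintype.card G := by
  obtain rfl : fhat = dft e f := funext hfhat
  have hcard : (0 : ℝ) < Fintype.card G := mod_cast Fintype.card_pos
  have key := le_ncard_support_mul_ncard_support e (fun x ξ => (starRingEnd ℂ) (e x ξ))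
    (fun x ξ => (habs x ξ).le) (fun x ξ => by simp [habs]) hcard hf
    (fun x => (sum_dft_mul_eq habs hmul₁ hmul₂ hnd₁ f x).symm) (fun ξ => by simp [dft])
  exact_mod_cast key

theorem uncertainty_principle_finite_abelian
    {G : Type*} [AddCommGroup G] [Fintype G]
    (e : G → G → ℂ)
    (habs : ∀ x ξ, ‖e x ξ‖ = 1)
    (hmul₁ : ∀ x x' ξ, e (x + x') ξ = e x ξ * e x' ξ)
    (hmul₂ : ∀ x ξ ξ', e x (ξ + ξ') = e x ξ * e x ξ')
    (hnd₁ : ∀ x : G, x ≠ 0 → ∃ ξ : G, e x ξ ≠ 1)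
    (hnd₂ : ∀ ξ : G, ξ ≠ 0 → ∃ x : G, e x ξ ≠ 1)
    (f : G → ℂ) (hf : f ≠ 0)
    (fhat : G → ℂ)
    (hfhat : ∀ ξ, fhat ξ = (Fintype.card G : ℂ)⁻¹ * ∑ x : G, f x * (starRingEnd ℂ) (e x ξ)) :
    (Function.support f).ncard * (Function.support fhat).ncard ≥ Fintype.card G :=
  uncertainty_principle_finite_abelian_general e habs hmul₁ hmul₂ hnd₁ f hf fhat hfhat
end

section
/- Let p be prime, n a positive integer, and P a polynomial in n variables with integer coefficients. If there exist p-th roots of unity ω₁, …, ωₙ (not necessarily distinct) in ℂ with P(ω₁,…,ωₙ) = 0, then p divides P(1,…,1). -/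
theorem int_poly_roots_of_unity_dvd
    (p : ℕ) (hp : p.Prime) (n : ℕ) (hn : 0 < n)
    (P : MvPolynomial (Fin n) ℤ) (ω : Fin n → ℂ)
    (hω : ∀ j, ω j ^ p = 1)
    (hzero : MvPolynomial.aeval ω P = 0) :
    (p : ℤ) ∣ MvPolynomial.eval (fun _ => (1 : ℤ)) P := by
  haveI : Fact p.Prime := ⟨hp⟩
  have hp0 : 0 < p := hp.pos
  set ζ : ℂ := Complex.exp (2 * Real.pi * Complex.I / p) with hζdef
  have hζ : IsPrimitiveRoot ζ p := Complex.isPrimitiveRoot_exp p hp0.ne'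
  have hk : ∀ j, ∃ i, ζ ^ i = ω j := fun j => by
    obtain ⟨i, _, hi⟩ := hζ.eq_pow_of_pow_eq_one (hω j)
    exact ⟨i, hi⟩
  choose k hkeq using hk
  set Q : Polynomial ℤ :=
    MvPolynomial.aeval (fun j => (Polynomial.X : Polynomial ℤ) ^ k j) P with hQdef
  have hQζ : Polynomial.aeval ζ Q = 0 := by
    rw [hQdef]
    have : (Polynomial.aeval ζ).comp
        (MvPolynomial.aeval (R := ℤ) (fun j => (Polynomial.X : Polynomial ℤ) ^ k j))
        = MvPolynomial.aeval ω := by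
      apply MvPolynomial.algHom_ext
      intro j
      simp [hkeq j]
    calc Polynomial.aeval ζ
          (MvPolynomial.aeval (fun j => (Polynomial.X : Polynomial ℤ) ^ k j) P)
        = ((Polynomial.aeval ζ).comp
            (MvPolynomial.aeval (fun j => (Polynomial.X : Polynomial ℤ) ^ k j))) P := rfl
      _ = MvPolynomial.aeval ω P := by rw [this]
      _ = 0 := hzero
  have hdvdQ : Polynomial.cyclotomic p ℤ ∣ Q := by
    have hmin : Polynomial.cyclotomic p ℚ = minpoly ℚ ζ :=
      Polynomial.cyclotomic_eq_minpoly_rat hζ hp0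
    have hdvd' : Polynomial.cyclotomic p ℚ ∣ Q.map (algebraMap ℤ ℚ) := by
      rw [hmin]
      apply minpoly.dvd
      rwa [Polynomial.aeval_map_algebraMap]
    rw [← Polynomial.map_cyclotomic p (algebraMap ℤ ℚ)] at hdvd'
    exact (Polynomial.map_dvd_map _ ((algebraMap ℤ ℚ).injective_int)
      (Polynomial.cyclotomic.monic p ℤ)).mp hdvd'
  have hQ1 : Q.eval 1 = MvPolynomial.eval (fun _ => (1 : ℤ)) P := by
    rw [hQdef]
    have : (Polynomial.evalRingHom (1 : ℤ)).comp
        ((MvPolynomial.aeval (R := ℤ) (fun j => (Polynomial.X : Polynomial ℤ) ^ k j))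
          : MvPolynomial (Fin n) ℤ →+* Polynomial ℤ)
        = (MvPolynomial.eval (fun _ => (1 : ℤ))) := by
      apply MvPolynomial.ringHom_ext <;> intro x <;> simp
    calc Polynomial.eval 1 (MvPolynomial.aeval (fun j => (Polynomial.X : Polynomial ℤ) ^ k j) P)
        = ((Polynomial.evalRingHom (1 : ℤ)).comp
            ((MvPolynomial.aeval (R := ℤ) (fun j => (Polynomial.X : Polynomial ℤ) ^ k j))
              : MvPolynomial (Fin n) ℤ →+* Polynomial ℤ)) P := rfl
      _ = MvPolynomial.eval (fun _ => (1 : ℤ)) P := by rw [this]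
  rw [← hQ1]
  obtain ⟨R, hR⟩ := hdvdQ
  rw [hR, Polynomial.eval_mul, Polynomial.eval_one_cyclotomic_prime]
  exact Dvd.intro _ rfl
end

section
/- Let p be prime and 1 ≤ n ≤ p. If x₁,…,xₙ are distinct elements of ℤ/pℤ and ξ₁,…,ξₙ are distinct elements of ℤ/pℤ, then the n×n matrix with entries exp(2πi xⱼ ξₖ / p) has nonzero determinant. -/
open Complex

/-
Write `a k = (ξ k).val`, `b j = (x j).val` and `ζ = exp (2πi/p)`. The matrix is the alternant
`D = det (X j ^ a k)` in `ℤ[X_1, …, X_n]` evaluated at `X j = ζ ^ b j`. Since `D` vanishes when two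
variables are identified, `D = V * Q` with `V` the Vandermonde determinant, and `V(ζ ^ b) ≠ 0`.
If `Q(ζ ^ b) = 0`, then `Q(t ^ b)` is divisible in `ℤ[t]` by the cyclotomic polynomial `Φ_p`, so
`p ∣ Q(1, …, 1)` because `Φ_p(1) = p`. But the principal specialisation `X j = t ^ j` turns `D` and
`V` into Vandermonde determinants in powers of `t`; cancelling the common factor `(t - 1) ^ N` and
setting `t = 1` gives `∏ (a l - a k) = ∏ (j - i) * Q(1, …, 1)`, whose left side is prime to `p`.
-/

namespace MvPolynomial

variable {R σ : Type*} [CommRing R] [DecidableEq σ]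

theorem X_sub_X_dvd_sub_rename_update (i j : σ) (P : MvPolynomial σ R) :
    X j - X i ∣ P - rename (Function.update id j i) P := by
  set I := Ideal.span {(X j - X i : MvPolynomial σ R)}
  have hmk : (Ideal.Quotient.mkₐ R I).comp (rename (Function.update id j i)) =
      Ideal.Quotient.mkₐ R I := by
    ext k
    by_cases hk : k = j
    · subst hk
      simpa [Ideal.Quotient.eq, I, Ideal.mem_span_singleton] using dvd_sub_comm.mp dvd_rfl
    · simp [hk]
  rw [← Ideal.mem_span_singleton, ← Ideal.Quotient.eq]
  exact (DFunLike.congr_fun hmk P).symm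

theorem X_sub_X_dvd_iff_rename_update_eq_zero {i j : σ} (hij : i ≠ j) (P : MvPolynomial σ R) :
    X j - X i ∣ P ↔ rename (Function.update id j i) P = 0 := by
  refine ⟨?_, fun h => by simpa [h] using X_sub_X_dvd_sub_rename_update i j P⟩
  rintro ⟨c, rfl⟩
  simp [Function.update_of_ne hij]

theorem prime_X_sub_X [IsDomain R] {i j : σ} (hij : i ≠ j) :
    Prime (X j - X i : MvPolynomial σ R) := by
  have hrename := (X_sub_X_dvd_iff_rename_update_eq_zero (R := R) hij (X j - X i)).mp dvd_rfl
  refine ⟨sub_ne_zero.mpr fun h => hij (X_injective h).symm,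
    fun hu => not_isUnit_zero (hrename ▸ hu.map (rename (Function.update id j i))), ?_⟩
  intro a b hab
  simp only [X_sub_X_dvd_iff_rename_update_eq_zero hij] at hab ⊢
  exact mul_eq_zero.mp (map_mul (rename _) a b ▸ hab)

theorem eq_and_eq_or_of_X_sub_X_dvd [Nontrivial R] {i j k l : σ} (hij : i ≠ j) (hkl : k ≠ l)
    (h : (X j - X i : MvPolynomial σ R) ∣ X l - X k) : (k = i ∧ l = j) ∨ (k = j ∧ l = i) := by
  rw [X_sub_X_dvd_iff_rename_update_eq_zero hij, map_sub, rename_X, rename_X, sub_eq_zero] at h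
  have hidx := X_injective h
  simp only [Function.update_apply, id] at hidx
  split_ifs at hidx <;> aesop

theorem det_vandermonde_X_dvd [IsDomain R] [UniqueFactorizationMonoid R] {n : ℕ}
    {P : MvPolynomial (Fin n) R} (hP : ∀ i j, i ≠ j → rename (Function.update id j i) P = 0) :
    (Matrix.vandermonde X).det ∣ P := by
  rw [Matrix.det_vandermonde, Finset.prod_sigma']
  refine Finset.prod_dvd_of_isRelPrime ?_ ?_
  · rintro ⟨i, j⟩ hij ⟨k, l⟩ hkl hne
    simp only [Finset.coe_sigma, Set.mem_sigma_iff, Finset.coe_univ, Set.mem_univ,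
      Finset.coe_Ioi, Set.mem_Ioi, true_and] at hij hkl
    rw [Function.onFun, (prime_X_sub_X hij.ne).irreducible.isRelPrime_iff_not_dvd]
    intro h
    rcases eq_and_eq_or_of_X_sub_X_dvd hij.ne hkl.ne h with ⟨rfl, rfl⟩ | ⟨rfl, rfl⟩
    · exact hne rfl
    · exact lt_asymm hij hkl
  · rintro ⟨i, j⟩ hij
    simp only [Finset.mem_sigma, Finset.mem_univ, Finset.mem_Ioi, true_and] at hij
    exact (X_sub_X_dvd_iff_rename_update_eq_zero hij.ne P).mpr (hP i j hij.ne)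

theorem det_vandermonde_X_dvd_det_X_pow [IsDomain R] [UniqueFactorizationMonoid R] {n : ℕ}
    (a : Fin n → ℕ) :
    (Matrix.vandermonde X).det ∣
      (Matrix.of fun j k => (X j : MvPolynomial (Fin n) R) ^ a k).det := by
  refine det_vandermonde_X_dvd fun i j hij => ?_
  rw [AlgHom.map_det]
  refine Matrix.det_zero_of_row_eq hij.symm ?_
  ext k
  simp [Function.update_of_ne hij]

end MvPolynomial

section

open Polynomial Finset

theorem Polynomial.exists_det_vandermonde_X_pow_eq {R : Type*} [CommRing R] {n : ℕ}
    (c : Fin n → ℕ) :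
    ∃ W : R[X], (Matrix.vandermonde fun i => (X : R[X]) ^ c i).det =
        (X - 1) ^ (∑ i : Fin n, #(Ioi i)) * W ∧
      W.eval 1 = (Matrix.vandermonde fun i => (c i : R)).det := by
  set G : ℕ → R[X] := fun m => ∑ k ∈ range m, X ^ k
  refine ⟨∏ i, ∏ j ∈ Ioi i, (G (c j) - G (c i)), ?_, ?_⟩
  · have hfactor : ∀ a b, (X : R[X]) ^ a - X ^ b = (X - 1) * (G a - G b) := fun a b => by
      rw [mul_sub, mul_geom_sum, mul_geom_sum]
      ring
    simp only [Matrix.det_vandermonde, hfactor, prod_mul_distrib, prod_const,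
      prod_pow_eq_pow_sum]
  · simp [G, Matrix.det_vandermonde, eval_prod]

theorem det_vandermonde_natCast_eq_mul_eval_one {R : Type*} [CommRing R]
    [IsDomain R] {n : ℕ} {a : Fin n → ℕ} {Q : MvPolynomial (Fin n) R}
    (hQ : (Matrix.of fun j k => (MvPolynomial.X j : MvPolynomial (Fin n) R) ^ a k).det =
      (Matrix.vandermonde MvPolynomial.X).det * Q) :
    (Matrix.vandermonde fun k => (a k : R)).det =
      (Matrix.vandermonde fun j : Fin n => ((j : ℕ) : R)).det * MvPolynomial.eval 1 Q := by
  set ψ := MvPolynomial.aeval (R := R) fun j : Fin n => (X : R[X]) ^ (j : ℕ)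
  obtain ⟨Wa, hWa, hWa1⟩ := exists_det_vandermonde_X_pow_eq (R := R) a
  obtain ⟨W, hW, hW1⟩ := exists_det_vandermonde_X_pow_eq (R := R) fun j : Fin n => (j : ℕ)
  have hψD : ψ.mapMatrix (Matrix.of fun j k => (MvPolynomial.X j : MvPolynomial (Fin n) R) ^ a k) =
      (Matrix.vandermonde fun k => (X : R[X]) ^ a k).transpose := by
    ext j k
    simp [ψ, ← pow_mul, mul_comm]
  have hψV : ψ.mapMatrix (Matrix.vandermonde MvPolynomial.X) =
      Matrix.vandermonde fun j : Fin n => (X : R[X]) ^ (j : ℕ) := by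
    ext j k
    simp [ψ]
  have hψ := congrArg ψ hQ
  rw [map_mul, AlgHom.map_det, AlgHom.map_det, hψD, hψV, Matrix.det_transpose, hWa, hW,
    mul_assoc] at hψ
  have hone := congrArg (eval 1) (mul_left_cancel₀ (pow_ne_zero _ (X_sub_C_ne_zero 1)) hψ)
  rw [eval_mul, hWa1, hW1] at hone
  rw [hone, ← coe_aeval_eq_eval, MvPolynomial.comp_aeval_apply]
  simp only [map_pow, aeval_X, one_pow]
  rfl

theorem IsPrimitiveRoot.prime_dvd_eval_one_of_aeval_eq_zero {K : Type*} [Field K] [CharZero K]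
    {p : ℕ} [Fact p.Prime] {ζ : K} (hζ : IsPrimitiveRoot ζ p) {q : ℤ[X]} (hq : aeval ζ q = 0) :
    (p : ℤ) ∣ q.eval 1 := by
  have hp := (Fact.out : p.Prime).pos
  obtain ⟨r, rfl⟩ : cyclotomic p ℤ ∣ q := by
    rw [cyclotomic_eq_minpoly hζ hp]
    exact minpoly.isIntegrallyClosed_dvd (hζ.isIntegral hp) hq
  rw [eval_mul, eval_one_cyclotomic_prime]
  exact dvd_mul_right _ _

theorem IsPrimitiveRoot.prime_dvd_eval_one_of_aeval_pow_eq_zero {K σ : Type*} [Field K]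
    [CharZero K] {p : ℕ} [Fact p.Prime] {ζ : K} (hζ : IsPrimitiveRoot ζ p) (b : σ → ℕ)
    {Q : MvPolynomial σ ℤ} (hQ : MvPolynomial.aeval (fun j => ζ ^ b j) Q = 0) :
    (p : ℤ) ∣ MvPolynomial.eval 1 Q := by
  have hdvd := hζ.prime_dvd_eval_one_of_aeval_eq_zero
    (q := MvPolynomial.aeval (fun j => (X : ℤ[X]) ^ b j) Q)
    (by rw [← hQ, MvPolynomial.comp_aeval_apply]; simp)
  rw [← coe_aeval_eq_eval, MvPolynomial.comp_aeval_apply] at hdvd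
  simp only [map_pow, aeval_X, one_pow] at hdvd
  exact hdvd

end

theorem ZMod.not_dvd_det_vandermonde_val {p : ℕ} [Fact p.Prime] {n : ℕ} {ξ : Fin n → ZMod p}
    (hξ : Function.Injective ξ) :
    ¬ (p : ℤ) ∣ (Matrix.vandermonde fun k => ((ξ k).val : ℤ)).det := by
  have hcast : (((Matrix.vandermonde fun k => ((ξ k).val : ℤ)).det : ℤ) : ZMod p) =
      (Matrix.vandermonde ξ).det := by
    simp [Matrix.det_vandermonde]
  rw [← ZMod.intCast_zmod_eq_zero_iff_dvd, hcast]
  exact Matrix.det_vandermonde_ne_zero_iff.mpr hξ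

theorem IsPrimitiveRoot.det_pow_val_mul_val_ne_zero {K : Type*} [Field K] [CharZero K] {p : ℕ}
    [Fact p.Prime] {ζ : K} (hζ : IsPrimitiveRoot ζ p) {n : ℕ} {x ξ : Fin n → ZMod p}
    (hx : Function.Injective x) (hξ : Function.Injective ξ) :
    (Matrix.of fun j k => ζ ^ ((x j).val * (ξ k).val)).det ≠ 0 := by
  set g : Fin n → K := fun j => ζ ^ (x j).val
  have hg : Function.Injective g := fun i j h =>
    hx (ZMod.val_injective p (hζ.pow_inj (ZMod.val_lt _) (ZMod.val_lt _) h))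
  obtain ⟨Q, hQ⟩ := MvPolynomial.det_vandermonde_X_dvd_det_X_pow (R := ℤ) fun k => (ξ k).val
  have hD : MvPolynomial.aeval g (Matrix.of fun j k =>
      (MvPolynomial.X j : MvPolynomial (Fin n) ℤ) ^ (ξ k).val).det =
      (Matrix.of fun j k => ζ ^ ((x j).val * (ξ k).val)).det := by
    rw [AlgHom.map_det]
    congr 1
    ext j k
    simp [g, pow_mul]
  have hV : MvPolynomial.aeval g
      (Matrix.vandermonde (MvPolynomial.X : Fin n → MvPolynomial (Fin n) ℤ)).det =
      (Matrix.vandermonde g).det := by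
    rw [AlgHom.map_det]
    congr 1
    ext j k
    simp
  intro h0
  have hQ0 : MvPolynomial.aeval g Q = 0 := by
    have hDg := congrArg (MvPolynomial.aeval g) hQ
    rw [hD, h0, map_mul, hV] at hDg
    exact (mul_eq_zero.mp hDg.symm).resolve_left (Matrix.det_vandermonde_ne_zero_iff.mpr hg)
  apply ZMod.not_dvd_det_vandermonde_val hξ
  rw [det_vandermonde_natCast_eq_mul_eval_one hQ]
  exact dvd_mul_of_dvd_right (hζ.prime_dvd_eval_one_of_aeval_pow_eq_zero _ hQ0) _

theorem chebotarev_minors_general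
    (p : ℕ) (hp : p.Prime) (n : ℕ)
    (x ξ : Fin n → ZMod p)
    (hx : Function.Injective x) (hξ : Function.Injective ξ) :
    Matrix.det (Matrix.of fun j k : Fin n =>
      Complex.exp (2 * Real.pi * Complex.I * ((x j).val * (ξ k).val) / p)) ≠ 0 := by
  have := Fact.mk hp
  have hentries : (Matrix.of fun j k : Fin n =>
      Complex.exp (2 * Real.pi * Complex.I * ((x j).val * (ξ k).val) / p)) =
      Matrix.of fun j k => Complex.exp (2 * Real.pi * Complex.I / p) ^ ((x j).val * (ξ k).val) := by
    ext j k
    rw [Matrix.of_apply, Matrix.of_apply, ← Complex.exp_nat_mul]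
    push_cast
    ring_nf
  rw [hentries]
  exact (Complex.isPrimitiveRoot_exp p hp.ne_zero).det_pow_val_mul_val_ne_zero hx hξ

theorem chebotarev_minors
    (p : ℕ) (hp : p.Prime) (n : ℕ) (hn : 1 ≤ n) (hnp : n ≤ p)
    (x ξ : Fin n → ZMod p)
    (hx : Function.Injective x) (hξ : Function.Injective ξ) :
    Matrix.det (Matrix.of fun j k : Fin n =>
      Complex.exp (2 * Real.pi * Complex.I * ((x j).val * (ξ k).val) / p)) ≠ 0 :=
  chebotarev_minors_general p hp n x ξ hx hξ
end

section
/- Let p be prime and 1 ≤ n ≤ p, with distinct ξ₁,…,ξₙ ∈ {0,1,…,p−1}. Define D(z₁,…,zₙ) = det(zⱼ^{ξₖ})_{1≤j,k≤n}, which factors as D = P · ∏_{1≤j<j'≤n}(zⱼ − z_{j'}) for a polynomial P with integer coefficients. Then P(1,…,1) is not divisible by p. -/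
open MvPolynomial Finset

noncomputable def dd (a b : ℕ) : Polynomial ℤ :=
  (∑ i ∈ Finset.range a, Polynomial.X ^ i) - ∑ i ∈ Finset.range b, Polynomial.X ^ i

lemma dd_mul (a b : ℕ) : dd a b * (Polynomial.X - 1) = Polynomial.X ^ a - Polynomial.X ^ b := by
  simp [dd, sub_mul, geom_sum_mul]

lemma dd_eval (a b : ℕ) : (dd a b).eval 1 = (a : ℤ) - b := by
  simp [dd, Polynomial.eval_finset_sum]

theorem minor_cofactor_not_div
    (p : ℕ) (hp : p.Prime) (n : ℕ) (hn : 1 ≤ n) (hnp : n ≤ p)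
    (ξ : Fin n → ℕ) (hξ : Function.Injective ξ) (hξp : ∀ k, ξ k < p)
    (P : MvPolynomial (Fin n) ℤ)
    (hfac : Matrix.det (Matrix.of fun j k : Fin n => (X j : MvPolynomial (Fin n) ℤ) ^ ξ k)
      = P * ∏ q ∈ Finset.univ.filter (fun q : Fin n × Fin n => q.1 < q.2), (X q.1 - X q.2)) :
    ¬ ((p : ℤ) ∣ MvPolynomial.eval (fun _ => (1 : ℤ)) P) := by
  classical
  intro hdvd
  set S := Finset.univ.filter (fun q : Fin n × Fin n => q.1 < q.2) with hS
  set φ : MvPolynomial (Fin n) ℤ →+* Polynomial ℤ :=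
    (MvPolynomial.aeval (fun j : Fin n => (Polynomial.X : Polynomial ℤ) ^ (j : ℕ))).toRingHom with hφ
  have h1 := congrArg φ hfac
  rw [RingHom.map_det, RingHom.mapMatrix_apply] at h1
  have hM : (Matrix.of fun j k : Fin n => (X j : MvPolynomial (Fin n) ℤ) ^ ξ k).map φ
      = Matrix.transpose (Matrix.vandermonde fun k => (Polynomial.X : Polynomial ℤ) ^ ξ k) := by
    ext j k
    simp [Matrix.vandermonde, hφ, pow_right_comm]
  rw [hM, Matrix.det_transpose, Matrix.det_vandermonde, map_mul, map_prod] at h1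
  have hprod : ∀ f : Fin n → Fin n → Polynomial ℤ,
      (∏ i : Fin n, ∏ j ∈ Finset.Ioi i, f i j) = ∏ q ∈ S, f q.1 q.2 := by
    intro f
    rw [hS, Finset.prod_filter, ← Finset.univ_product_univ, Finset.prod_product]
    refine Finset.prod_congr rfl fun i _ => ?_
    rw [← Finset.prod_filter]
    congr 1
    ext j; simp
  rw [hprod] at h1
  have h2 : ∏ q ∈ S, (dd (ξ q.2) (ξ q.1) * (Polynomial.X - 1))
      = φ P * ∏ q ∈ S, (dd (q.1 : ℕ) (q.2 : ℕ) * (Polynomial.X - 1)) := by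
    simp only [dd_mul]
    rw [h1]
    refine congrArg _ (Finset.prod_congr rfl fun q _ => ?_)
    simp [hφ]
  rw [Finset.prod_mul_distrib, Finset.prod_mul_distrib, Finset.prod_const, ← mul_assoc] at h2
  have hX1 : (Polynomial.X - 1 : Polynomial ℤ) ^ S.card ≠ 0 := by
    apply pow_ne_zero
    intro h
    have := congrArg (Polynomial.eval 0) h
    simp at this
  have h3 : ∏ q ∈ S, dd (ξ q.2) (ξ q.1) = φ P * ∏ q ∈ S, dd (q.1 : ℕ) (q.2 : ℕ) :=
    mul_right_cancel₀ hX1 h2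
  have h4 := congrArg (Polynomial.eval 1) h3
  have hE : (φ P).eval 1 = MvPolynomial.eval (fun _ => (1 : ℤ)) P := by
    have : (Polynomial.evalRingHom (1 : ℤ)).comp φ
        = (MvPolynomial.eval (fun _ => (1 : ℤ)) : MvPolynomial (Fin n) ℤ →+* ℤ) := by
      apply MvPolynomial.ringHom_ext <;> intro x <;> simp [hφ]
    exact RingHom.congr_fun this P
  rw [Polynomial.eval_mul, Polynomial.eval_prod, Polynomial.eval_prod, hE] at h4
  simp only [dd_eval] at h4
  have hpz : Prime (p : ℤ) := Nat.prime_iff_prime_int.mp hp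
  have hdvdL : (p : ℤ) ∣ ∏ q ∈ S, ((ξ q.2 : ℤ) - (ξ q.1 : ℤ)) := by
    rw [h4]; exact Dvd.dvd.mul_right hdvd _
  obtain ⟨q, hqS, hq⟩ := hpz.exists_mem_finset_dvd hdvdL
  have hlt : q.1 < q.2 := by
    rw [hS] at hqS; simpa using hqS
  have hne : ξ q.2 ≠ ξ q.1 := fun h => (ne_of_lt hlt).symm (hξ h)
  have hsub : ((ξ q.2 : ℤ) - (ξ q.1 : ℤ)) ≠ 0 := by
    intro h; apply hne; exact_mod_cast sub_eq_zero.mp h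
  have hle : (p : ℤ) ≤ |(ξ q.2 : ℤ) - (ξ q.1 : ℤ)| :=
    Int.le_of_dvd (abs_pos.mpr hsub) ((dvd_abs _ _).mpr hq)
  have h5 : |(ξ q.2 : ℤ) - (ξ q.1 : ℤ)| < p := by
    rw [abs_sub_lt_iff]
    constructor <;> [skip; skip] <;>
      · have := hξp q.1; have := hξp q.2; push_cast; omega
  linarith
end

section
/- Let p be prime and 1 ≤ n ≤ p. For distinct x₁,…,xₙ ∈ ℤ/pℤ, the n complex numbers ωⱼ = exp(2πixⱼ/p) are distinct, and for any distinct ξ₁,…,ξₙ ∈ {0,…,p−1}, the vectors (ωⱼ^{ξ₁},…,ωⱼ^{ξₙ}) for j = 1,…,n are linearly independent over ℂ. -/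
open Complex

open Polynomial Matrix Finset

namespace Cheb

/-- A finset of naturals of cardinality `m` has sum at least `0+1+⋯+(m-1)`,
with equality iff it is `range m`. -/
lemma sum_range_le (m : ℕ) (S : Finset ℕ) (hc : S.card = m) :
    (∑ i ∈ range m, i) ≤ ∑ s ∈ S, s ∧
      ((∑ s ∈ S, s) = ∑ i ∈ range m, i → S = range m) := by
  induction m generalizing S with
  | zero =>
      rw [Finset.card_eq_zero] at hc
      subst hc; simp
  | succ m ih =>
      have hne : S.Nonempty := Finset.card_pos.mp (by omega)
      set M := S.max' hne with hM
      have hMS : M ∈ S := S.max'_mem hne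
      have hcard : (S.erase M).card = m := by
        rw [Finset.card_erase_of_mem hMS, hc]; omega
      have hler : m ≤ M := by
        by_contra h
        push_neg at h
        have hsub : S ⊆ range (M + 1) := fun s hs =>
          Finset.mem_range.mpr (Nat.lt_succ_of_le (S.le_max' s hs))
        have := Finset.card_le_card hsub
        rw [hc, Finset.card_range] at this
        omega
      obtain ⟨ih1, ih2⟩ := ih (S.erase M) hcard
      have hsum : ∑ s ∈ S, s = (∑ s ∈ S.erase M, s) + M := by
        rw [Finset.sum_erase_add S _ hMS]
      constructor
      · rw [Finset.sum_range_succ, hsum]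
        omega
      · intro heq
        rw [Finset.sum_range_succ, hsum] at heq
        have hM' : M = m := by omega
        have : ∑ s ∈ S.erase M, s = ∑ i ∈ range m, i := by omega
        have hS' := ih2 this
        subst hM'
        rw [Finset.range_add_one, ← hS', Finset.insert_erase hMS]

lemma sum_range_le_of_inj {n : ℕ} {b : Fin n → ℕ} (hb : Function.Injective b) :
    (∑ i ∈ range n, i) ≤ ∑ k, b k := by
  have h1 : ∑ k, b k = ∑ s ∈ Finset.univ.image b, s := by
    rw [Finset.sum_image (fun a _ c _ h => hb h)]
  rw [h1]
  exact (sum_range_le n _ (by rw [Finset.card_image_of_injective _ hb, Finset.card_univ,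
    Fintype.card_fin])).1

lemma image_eq_range_of_inj {n : ℕ} {b : Fin n → ℕ} (hb : Function.Injective b)
    (hs : ∑ k, b k = ∑ i ∈ range n, i) : ∀ k, b k < n := by
  have h1 : ∑ k, b k = ∑ s ∈ Finset.univ.image b, s := by
    rw [Finset.sum_image (fun a _ c _ h => hb h)]
  have h2 := (sum_range_le n (Finset.univ.image b)
    (by rw [Finset.card_image_of_injective _ hb, Finset.card_univ, Fintype.card_fin])).2
    (by rw [← h1, hs])
  intro k
  have : b k ∈ Finset.univ.image b := Finset.mem_image_of_mem b (Finset.mem_univ k)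
  rw [h2, Finset.mem_range] at this
  exact this

end Cheb

namespace Cheb2
open Cheb

/-- The binomial coefficient polynomial `X(X-1)⋯(X-b+1)/b!` over `ℚ`. -/
noncomputable def q (b : ℕ) : ℚ[X] := Polynomial.C ((b.factorial : ℚ)⁻¹) * descPochhammer ℚ b

lemma q_eval (m b : ℕ) : (q b).eval (m : ℚ) = (m.choose b : ℚ) := by
  rw [q, eval_mul, eval_C, descPochhammer_eval_eq_descFactorial,
    Nat.descFactorial_eq_factorial_mul_choose]
  have : (b.factorial : ℚ) ≠ 0 := Nat.cast_ne_zero.mpr b.factorial_ne_zero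
  push_cast
  field_simp

lemma q_coeff_gt {b c : ℕ} (h : b < c) : (q b).coeff c = 0 := by
  apply coeff_eq_zero_of_natDegree_lt
  apply lt_of_le_of_lt (natDegree_mul_le)
  simp [descPochhammer_natDegree, h]

lemma q_coeff_self (b : ℕ) : (q b).coeff b = (b.factorial : ℚ)⁻¹ := by
  rw [q, coeff_C_mul]
  have h := (monic_descPochhammer ℚ b)
  have : (descPochhammer ℚ b).coeff b = 1 := by
    have := h.leadingCoeff
    rwa [leadingCoeff, descPochhammer_natDegree] at this
  rw [this, mul_one]

lemma q_natDegree (b : ℕ) : (q b).natDegree ≤ b := by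
  apply le_trans (natDegree_mul_le)
  simp [descPochhammer_natDegree]

lemma add_pow_expand (m D : ℕ) (h : m < D) :
    (X + 1 : ℚ[X]) ^ m = ∑ b ∈ range D, Polynomial.C ((m.choose b : ℚ)) * X ^ b := by
  rw [add_pow]
  rw [← Finset.sum_subset (Finset.range_subset_range.mpr h)
    (fun b _ hb => by
      rw [Finset.mem_range, not_lt] at hb
      rw [Nat.choose_eq_zero_of_lt (by omega)]
      simp)]
  apply Finset.sum_congr rfl
  intro b _
  rw [one_pow, mul_one, mul_comm, Polynomial.C_eq_natCast]

end Cheb2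

namespace Cheb3
open Cheb Cheb2

variable {n : ℕ}

noncomputable def d (u v : Fin n → ℕ) (b : Fin n → ℕ) : ℚ :=
  (Matrix.of fun k j : Fin n => ((u j * v k).choose (b k) : ℚ)).det

noncomputable def e (u : Fin n → ℕ) (r : Fin n → ℕ) : ℚ :=
  (Matrix.of fun k j : Fin n => (u j : ℚ) ^ (r k)).det

lemma e_eq_zero {u : Fin n → ℕ} {r : Fin n → ℕ} (hr : ¬ Function.Injective r) :
    e u r = 0 := by
  rw [Function.not_injective_iff] at hr
  obtain ⟨k, k', hkk', hne⟩ := hr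
  exact Matrix.det_zero_of_row_eq hne (by funext j; simp [hkk'])

lemma d_rep (u v : Fin n → ℕ) (b : Fin n → ℕ) (hb : ∀ k, b k ≤ ∑ i ∈ range n, i) :
    d u v b = ∑ r ∈ Fintype.piFinset (fun _ : Fin n => range ((∑ i ∈ range n, i) + 1)),
      (∏ k, (q (b k)).coeff (r k) * (v k : ℚ) ^ (r k)) * e u r := by
  classical
  set N := ∑ i ∈ range n, i with hN
  have hrow : (Matrix.of fun k j : Fin n => ((u j * v k).choose (b k) : ℚ))
      = fun k => ∑ c ∈ range (N + 1),
          ((q (b k)).coeff c * (v k : ℚ) ^ c) • (fun j => (u j : ℚ) ^ c) := by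
    funext k j
    rw [Finset.sum_apply]
    have h1 : ((u j * v k).choose (b k) : ℚ) = (q (b k)).eval ((u j * v k : ℕ) : ℚ) :=
      (q_eval _ _).symm
    rw [Matrix.of_apply, h1,
      Polynomial.eval_eq_sum_range' (n := N + 1) (lt_of_le_of_lt (q_natDegree (b k))
        (by have := hb k; omega))]
    apply Finset.sum_congr rfl
    intro c _
    rw [Pi.smul_apply, smul_eq_mul]
    push_cast
    rw [mul_pow]
    ring
  have hmain := (Matrix.detRowAlternating (R := ℚ) (n := Fin n)).toMultilinearMap.map_sum_finset
      (fun k c => ((q (b k)).coeff c * (v k : ℚ) ^ c) • (fun j => (u j : ℚ) ^ c : Fin n → ℚ))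
      (fun _ => range (N + 1))
  have hd : d u v b
      = (Matrix.detRowAlternating (R := ℚ) (n := Fin n)).toMultilinearMap
          (fun k => ∑ c ∈ range (N + 1),
          ((q (b k)).coeff c * (v k : ℚ) ^ c) • (fun j => (u j : ℚ) ^ c : Fin n → ℚ)) := by
    rw [d, hrow]; rfl
  rw [hd, hmain]
  apply Finset.sum_congr rfl
  intro r _
  have := (Matrix.detRowAlternating (R := ℚ) (n := Fin n)).toMultilinearMap.map_smul_univ
      (fun k => (q (b k)).coeff (r k) * (v k : ℚ) ^ (r k))
      (fun k => (fun j => (u j : ℚ) ^ (r k) : Fin n → ℚ))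
  rw [this, smul_eq_mul]
  rfl

end Cheb3

namespace Cheb3
open Cheb Cheb2

variable {n : ℕ}

lemma d_eq_zero (u v : Fin n → ℕ) (b : Fin n → ℕ) (hbs : ∑ k, b k < ∑ i ∈ range n, i) :
    d u v b = 0 := by
  have hb : ∀ k, b k ≤ ∑ i ∈ range n, i := fun k =>
    le_trans (Finset.single_le_sum (f := b) (fun _ _ => Nat.zero_le _) (Finset.mem_univ k))
      (le_of_lt hbs)
  rw [d_rep u v b hb]
  apply Finset.sum_eq_zero
  intro r _
  by_cases hinj : Function.Injective r
  · -- then ∑ r ≥ N; but if r ≤ b pointwise, ∑ r ≤ ∑ b < N: find k with b k < r k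
    by_cases hle : ∀ k, r k ≤ b k
    · exfalso
      have h1 := sum_range_le_of_inj hinj
      have h2 : ∑ k, r k ≤ ∑ k, b k := Finset.sum_le_sum (fun k _ => hle k)
      omega
    · push_neg at hle
      obtain ⟨k, hk⟩ := hle
      rw [Finset.prod_eq_zero (Finset.mem_univ k) (by rw [q_coeff_gt hk, zero_mul]), zero_mul]
  · rw [e_eq_zero hinj, mul_zero]

lemma d_eq_of_sum_eq (u v : Fin n → ℕ) (b : Fin n → ℕ) (hbs : ∑ k, b k = ∑ i ∈ range n, i) :
    d u v b = (∏ k, ((b k).factorial : ℚ)⁻¹ * (v k : ℚ) ^ (b k)) * e u b := by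
  have hb : ∀ k, b k ≤ ∑ i ∈ range n, i := fun k => by
    rw [← hbs]
    exact Finset.single_le_sum (f := b) (fun _ _ => Nat.zero_le _) (Finset.mem_univ k)
  rw [d_rep u v b hb]
  rw [Finset.sum_eq_single_of_mem b (by
      rw [Fintype.mem_piFinset]
      intro k
      rw [Finset.mem_range]
      have := hb k; omega)]
  · congr 1
    apply Finset.prod_congr rfl
    intro k _
    rw [q_coeff_self]
  · intro r _ hrb
    by_cases hinj : Function.Injective r
    · by_cases hle : ∀ k, r k ≤ b k
      · exfalso
        have h1 := sum_range_le_of_inj hinj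
        have h2 : ∑ k, r k < ∑ k, b k := by
          apply Finset.sum_lt_sum (fun k _ => hle k)
          by_contra hcon
          push_neg at hcon
          exact hrb (funext fun k => le_antisymm (hle k) (hcon k (Finset.mem_univ k)))
        omega
      · push_neg at hle
        obtain ⟨k, hk⟩ := hle
        rw [Finset.prod_eq_zero (Finset.mem_univ k) (by rw [q_coeff_gt hk, zero_mul]), zero_mul]
    · rw [e_eq_zero hinj, mul_zero]

lemma e_perm (u : Fin n → ℕ) (τ : Equiv.Perm (Fin n)) :
    e u (fun k => (τ k : ℕ))
      = (Equiv.Perm.sign τ : ℤ) * (Matrix.vandermonde (fun j => (u j : ℚ))).det := by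
  have hW : (Matrix.of fun k j : Fin n => (u j : ℚ) ^ ((τ k : Fin n) : ℕ))
      = fun k => (Matrix.vandermonde (fun j => (u j : ℚ)))ᵀ (τ k) := by
    funext k j
    simp [Matrix.vandermonde]
  rw [e]
  show (Matrix.of fun k j : Fin n => (u j : ℚ) ^ ((τ k : Fin n) : ℕ)).det = _
  have hsub : (Matrix.of fun k j : Fin n => (u j : ℚ) ^ ((τ k : Fin n) : ℕ))
      = ((Matrix.vandermonde (fun j => (u j : ℚ)))ᵀ).submatrix τ id := by
    funext k j
    simp [Matrix.vandermonde, Matrix.submatrix]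
  rw [hsub, Matrix.det_permute, Matrix.det_transpose]

end Cheb3

namespace Cheb4
open Cheb Cheb2 Cheb3

variable {n : ℕ}

noncomputable def F1 (u v : Fin n → ℕ) : ℚ[X] :=
  (Matrix.of fun j k : Fin n => (X + 1 : ℚ[X]) ^ (u j * v k)).det

lemma F1_rep (u v : Fin n → ℕ) (D : ℕ) (hD : ∀ j k, u j * v k < D) :
    F1 u v = ∑ b ∈ Fintype.piFinset (fun _ : Fin n => range D),
      Polynomial.C (d u v b) * X ^ (∑ k, b k) := by
  classical
  rw [F1, ← Matrix.det_transpose]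
  have hrow : (Matrix.of fun j k : Fin n => (X + 1 : ℚ[X]) ^ (u j * v k))ᵀ
      = fun k => ∑ b ∈ range D,
          (X ^ b : ℚ[X]) • (fun j => Polynomial.C ((u j * v k).choose b : ℚ)) := by
    funext k j
    rw [Matrix.transpose_apply, Finset.sum_apply, Matrix.of_apply,
      add_pow_expand _ D (hD j k)]
    apply Finset.sum_congr rfl
    intro b _
    rw [Pi.smul_apply, smul_eq_mul]
    ring
  have hmain := (Matrix.detRowAlternating (R := ℚ[X]) (n := Fin n)).toMultilinearMap.map_sum_finset
      (fun k b => (X ^ b : ℚ[X]) • (fun j => Polynomial.C ((u j * v k).choose b : ℚ) : Fin n → ℚ[X]))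
      (fun _ => range D)
  have hd : (Matrix.of fun j k : Fin n => (X + 1 : ℚ[X]) ^ (u j * v k))ᵀ.det
      = (Matrix.detRowAlternating (R := ℚ[X]) (n := Fin n)).toMultilinearMap
          (fun k => ∑ b ∈ range D,
            (X ^ b : ℚ[X]) • (fun j => Polynomial.C ((u j * v k).choose b : ℚ) : Fin n → ℚ[X])) := by
    rw [hrow]; rfl
  rw [hd, hmain]
  apply Finset.sum_congr rfl
  intro b _
  have hsmul := (Matrix.detRowAlternating (R := ℚ[X]) (n := Fin n)).toMultilinearMap.map_smul_univ
      (fun k => (X ^ (b k) : ℚ[X]))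
      (fun k => (fun j => Polynomial.C ((u j * v k).choose (b k) : ℚ) : Fin n → ℚ[X]))
  rw [hsmul, smul_eq_mul, Finset.prod_pow_eq_pow_sum]
  have hC : (Matrix.detRowAlternating (R := ℚ[X]) (n := Fin n)).toMultilinearMap
        (fun k => (fun j => Polynomial.C ((u j * v k).choose (b k) : ℚ) : Fin n → ℚ[X]))
      = Polynomial.C (d u v b) := by
    rw [d, RingHom.map_det]
    rfl
  rw [hC]
  ring

end Cheb4

namespace Cheb4
open Cheb Cheb2 Cheb3

variable {n : ℕ}

lemma F1_coeff_lt (u v : Fin n → ℕ) (D : ℕ) (hD : ∀ j k, u j * v k < D)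
    {r : ℕ} (hr : r < ∑ i ∈ range n, i) : (F1 u v).coeff r = 0 := by
  rw [F1_rep u v D hD, Polynomial.finset_sum_coeff]
  apply Finset.sum_eq_zero
  intro b _
  rw [Polynomial.coeff_C_mul, Polynomial.coeff_X_pow]
  by_cases h : r = ∑ k, b k
  · rw [if_pos h, d_eq_zero u v b (by omega), zero_mul]
  · rw [if_neg h, mul_zero]

lemma F1_coeff_N (u v : Fin n → ℕ) (D : ℕ) (hD : ∀ j k, u j * v k < D) (hnD : n ≤ D) :
    (F1 u v).coeff (∑ i ∈ range n, i)
      = (∏ i ∈ range n, ((i.factorial : ℚ))⁻¹) *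
        ((Matrix.vandermonde (fun j => (u j : ℚ))).det *
          (Matrix.vandermonde (fun k => (v k : ℚ))).det) := by
  classical
  set N := ∑ i ∈ range n, i with hN
  rw [F1_rep u v D hD, Polynomial.finset_sum_coeff]
  have hterm : ∀ b ∈ Fintype.piFinset (fun _ : Fin n => range D),
      (Polynomial.C (d u v b) * X ^ (∑ k, b k)).coeff N
        = if ∑ k, b k = N then d u v b else 0 := by
    intro b _
    rw [Polynomial.coeff_C_mul, Polynomial.coeff_X_pow]
    by_cases h : ∑ k, b k = N
    · rw [if_pos h, if_pos h.symm, mul_one]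
    · rw [if_neg h, if_neg (fun hc => h hc.symm), mul_zero]
  rw [Finset.sum_congr rfl hterm, Finset.sum_ite, Finset.sum_const, smul_zero, add_zero]
  -- now sum over the filtered set
  have hzero : ∀ b ∈ (Fintype.piFinset (fun _ : Fin n => range D)).filter
      (fun b => ∑ k, b k = N), d u v b ≠ 0 → Function.Injective b := by
    intro b hb hne
    by_contra hinj
    rw [Finset.mem_filter] at hb
    exact hne (by rw [d_eq_of_sum_eq u v b hb.2, e_eq_zero hinj, mul_zero])
  rw [← Finset.sum_filter_of_ne hzero]
  -- biject with permutations
  have hbij : ∑ b ∈ ((Fintype.piFinset (fun _ : Fin n => range D)).filter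
        (fun b => ∑ k, b k = N)).filter (fun b => Function.Injective b), d u v b
      = ∑ τ : Equiv.Perm (Fin n), d u v (fun k => (τ k : ℕ)) := by
    symm
    apply Finset.sum_bij (fun (τ : Equiv.Perm (Fin n)) _ => fun k => ((τ k : Fin n) : ℕ))
    · intro τ _
      simp only [Finset.mem_filter, Fintype.mem_piFinset, Finset.mem_range]
      refine ⟨⟨fun k => lt_of_lt_of_le (τ k).isLt hnD, ?_⟩, ?_⟩
      · rw [Equiv.sum_comp τ (fun i : Fin n => (i : ℕ)), Fin.sum_univ_eq_sum_range (fun i => i) n]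
      · intro a b hab
        exact τ.injective (Fin.val_injective hab)
    · intro τ _ τ' _ h
      ext k
      exact congrFun h k
    · intro b hb
      simp only [Finset.mem_filter, Fintype.mem_piFinset, Finset.mem_range] at hb
      obtain ⟨⟨-, hsum⟩, hinj⟩ := hb
      have hlt : ∀ k, b k < n := image_eq_range_of_inj hinj hsum
      have hbij' : Function.Bijective (fun k => (⟨b k, hlt k⟩ : Fin n)) :=
        Finite.injective_iff_bijective.mp (fun a c h => hinj (by
          have := congrArg Fin.val h
          exact this))
      refine ⟨Equiv.ofBijective _ hbij', Finset.mem_univ _, ?_⟩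
      funext k
      rfl
    · intro τ _
      rfl
  rw [hbij]
  have hval : ∀ τ : Equiv.Perm (Fin n), d u v (fun k => ((τ k : Fin n) : ℕ))
      = (∏ i ∈ range n, ((i.factorial : ℚ))⁻¹) * (Matrix.vandermonde (fun j => (u j : ℚ))).det
          * ((Equiv.Perm.sign τ : ℤ) * ∏ k, (v k : ℚ) ^ ((τ k : Fin n) : ℕ)) := by
    intro τ
    rw [d_eq_of_sum_eq u v _ (by
        rw [Equiv.sum_comp τ (fun i : Fin n => (i : ℕ)), Fin.sum_univ_eq_sum_range (fun i => i) n]),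
      e_perm u τ]
    rw [Finset.prod_mul_distrib]
    have : (∏ k, (((τ k : Fin n) : ℕ).factorial : ℚ)⁻¹) = ∏ i ∈ range n, ((i.factorial : ℚ))⁻¹ := by
      rw [Equiv.prod_comp τ (fun i : Fin n => ((i : ℕ).factorial : ℚ)⁻¹),
        Fin.prod_univ_eq_prod_range (fun i => ((i.factorial : ℚ))⁻¹) n]
    rw [this]
    ring
  have hdet : (Matrix.vandermonde (fun k => (v k : ℚ))).det
      = ∑ τ : Equiv.Perm (Fin n), (Equiv.Perm.sign τ : ℤ) * ∏ k, (v k : ℚ) ^ ((τ k : Fin n) : ℕ) := by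
    rw [← Matrix.det_transpose, Matrix.det_apply]
    apply Finset.sum_congr rfl
    intro τ _
    simp [Units.smul_def, Matrix.vandermonde]
  rw [Finset.sum_congr rfl (fun τ _ => hval τ), ← Finset.mul_sum, ← hdet]
  ring

end Cheb4

namespace Cheb5
open Cheb Cheb2 Cheb3 Cheb4

variable {n : ℕ}

noncomputable def Fz (u v : Fin n → ℕ) : ℤ[X] :=
  (Matrix.of fun j k : Fin n => (X : ℤ[X]) ^ (u j * v k)).det

lemma Fz_map_comp (u v : Fin n → ℕ) :
    ((Fz u v).comp (X + 1)).map (Int.castRingHom ℚ) = F1 u v := by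
  rw [Polynomial.map_comp]
  have h1 : (Fz u v).map (Int.castRingHom ℚ)
      = (Matrix.of fun j k : Fin n => (X : ℚ[X]) ^ (u j * v k)).det := by
    rw [Fz, ← Polynomial.coe_mapRingHom, RingHom.map_det]
    congr 1
    ext i j
    simp
  rw [h1, show ((X + 1 : ℤ[X]).map (Int.castRingHom ℚ)) = X + 1 by simp]
  have h2 : ((Matrix.of fun j k : Fin n => (X : ℚ[X]) ^ (u j * v k)).det).comp (X + 1)
      = (Polynomial.eval₂RingHom Polynomial.C (X + 1 : ℚ[X]))
          ((Matrix.of fun j k : Fin n => (X : ℚ[X]) ^ (u j * v k)).det) := rfl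
  rw [h2, RingHom.map_det, F1]
  congr 1
  ext i j
  simp [Matrix.map_apply]

end Cheb5

open Cheb Cheb2 Cheb3 Cheb4 Cheb5

theorem fourier_rows_linear_independent
    (p : ℕ) (hp : p.Prime) (n : ℕ) (hn : 1 ≤ n) (hnp : n ≤ p)
    (x : Fin n → ZMod p) (hx : Function.Injective x)
    (ω : Fin n → ℂ)
    (hω : ∀ j, ω j = Complex.exp (2 * Real.pi * Complex.I * ((x j).val : ℂ) / p))
    (ξ : Fin n → ℕ) (hξ : Function.Injective ξ) (hξp : ∀ k, ξ k < p) :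
    Function.Injective ω ∧
      LinearIndependent ℂ (fun j : Fin n => (fun k : Fin n => ω j ^ ξ k)) := by
  haveI : Fact p.Prime := ⟨hp⟩
  haveI : NeZero p := ⟨hp.ne_zero⟩
  set u : Fin n → ℕ := fun j => (x j).val with hu
  have hu_lt : ∀ j, u j < p := fun j => ZMod.val_lt (x j)
  have hu_cast : ∀ j, ((u j : ℕ) : ZMod p) = x j := fun j => ZMod.natCast_rightInverse (x j)
  have hu_inj : Function.Injective u := by
    intro a b hab
    apply hx
    rw [← hu_cast a, ← hu_cast b, hab]
  set ζ : ℂ := Complex.exp (2 * Real.pi * Complex.I / p) with hζdef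
  have hζ : IsPrimitiveRoot ζ p := Complex.isPrimitiveRoot_exp p hp.ne_zero
  have hωζ : ∀ j, ω j = ζ ^ u j := by
    intro j
    rw [hω, hζdef, ← Complex.exp_nat_mul]
    congr 1
    ring
  have hωinj : Function.Injective ω := by
    intro a b hab
    rw [hωζ a, hωζ b] at hab
    exact hu_inj (hζ.pow_inj (hu_lt a) (hu_lt b) hab)
  refine ⟨hωinj, ?_⟩
  -- the matrix and its determinant
  set A : Matrix (Fin n) (Fin n) ℂ := Matrix.of fun j k => ω j ^ ξ k with hA
  have hentry : A = (Polynomial.eval₂RingHom (Int.castRingHom ℂ) ζ).mapMatrix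
      (Matrix.of fun j k : Fin n => (X : ℤ[X]) ^ (u j * ξ k)) := by
    rw [RingHom.mapMatrix_apply]
    ext j k
    show ω j ^ ξ k = _
    simp only [Matrix.map_apply, Matrix.of_apply, Polynomial.coe_eval₂RingHom,
      Polynomial.eval₂_X_pow]
    rw [pow_mul, ← hωζ j]
  have hdetA : A.det = (Polynomial.eval₂RingHom (Int.castRingHom ℂ) ζ) (Fz u ξ) := by
    rw [hentry, Fz, ← RingHom.map_det]
  -- suppose the determinant vanishes
  have hdet : A.det ≠ 0 := by
    intro hdet0
    set N := ∑ i ∈ Finset.range n, i with hN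
    have hDlt : ∀ j k, u j * ξ k < p * p := fun j k =>
      Nat.mul_lt_mul'' (hu_lt j) (hξp k)
    have hnD : n ≤ p * p := le_trans hnp (Nat.le_mul_of_pos_left p hp.pos)
    -- the cyclotomic polynomial divides Fz
    have haev : Polynomial.aeval ζ (Fz u ξ) = 0 := by
      rw [Polynomial.aeval_def, algebraMap_int_eq]
      have h0 := hdet0
      rw [hdetA] at h0
      exact h0
    have hdvd : Polynomial.cyclotomic p ℤ ∣ Fz u ξ := by
      rw [Polynomial.cyclotomic_eq_minpoly hζ hp.pos]
      exact minpoly.isIntegrallyClosed_dvd (hζ.isIntegral hp.pos) haev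
    obtain ⟨G, hG⟩ := hdvd
    set F1z : ℤ[X] := (Fz u ξ).comp (X + 1) with hF1z
    have hmap : F1z.map (Int.castRingHom ℚ) = F1 u ξ := Fz_map_comp u ξ
    -- low coefficients vanish
    have hlow : ∀ r < N, F1z.coeff r = 0 := by
      intro r hr
      have h2 : (F1z.map (Int.castRingHom ℚ)).coeff r = 0 := by
        rw [hmap]
        exact F1_coeff_lt u ξ (p * p) hDlt hr
      rw [Polynomial.coeff_map] at h2
      simpa using h2
    have hXN : (X : ℤ[X]) ^ N ∣ F1z := Polynomial.X_pow_dvd_iff.mpr hlow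
    -- factorization
    have hfac : F1z = (Polynomial.cyclotomic p ℤ).comp (X + 1) * G.comp (X + 1) := by
      rw [hF1z, hG, Polynomial.mul_comp]
    have hC1 : ¬ (X : ℤ[X]) ∣ (Polynomial.cyclotomic p ℤ).comp (X + 1) := by
      rw [Polynomial.X_dvd_iff, Polynomial.coeff_zero_eq_eval_zero, Polynomial.eval_comp]
      simp only [Polynomial.eval_add, Polynomial.eval_X, Polynomial.eval_one, zero_add]
      rw [Polynomial.eval_one_cyclotomic_prime]
      exact_mod_cast hp.ne_zero
    have hXG : (X : ℤ[X]) ^ N ∣ G.comp (X + 1) :=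
      Polynomial.prime_X.pow_dvd_of_dvd_mul_left N hC1 (hfac ▸ hXN)
    obtain ⟨g, hg⟩ := hXG
    -- p divides the N-th coefficient
    have hpc : (p : ℤ) ∣ F1z.coeff N := by
      rw [hfac, hg, show (Polynomial.cyclotomic p ℤ).comp (X + 1) * (X ^ N * g)
          = X ^ N * ((Polynomial.cyclotomic p ℤ).comp (X + 1) * g) by ring]
      have hc := Polynomial.coeff_X_pow_mul ((Polynomial.cyclotomic p ℤ).comp (X + 1) * g) N 0
      rw [zero_add] at hc
      rw [hc, Polynomial.mul_coeff_zero,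
        Polynomial.coeff_zero_eq_eval_zero, Polynomial.coeff_zero_eq_eval_zero,
        Polynomial.eval_comp]
      simp only [Polynomial.eval_add, Polynomial.eval_X, Polynomial.eval_one, zero_add]
      rw [Polynomial.eval_one_cyclotomic_prime]
      exact dvd_mul_right _ _
    -- the integer Vandermonde determinants
    set Vu : ℤ := (Matrix.vandermonde fun j => (u j : ℤ)).det with hVu
    set Vv : ℤ := (Matrix.vandermonde fun k => (ξ k : ℤ)).det with hVv
    have hcastQ : ∀ (w : Fin n → ℕ),
        (((Matrix.vandermonde fun j => (w j : ℤ)).det : ℤ) : ℚ)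
          = (Matrix.vandermonde fun j => (w j : ℚ)).det := by
      intro w
      have h := RingHom.map_det (Int.castRingHom ℚ) (Matrix.vandermonde fun j => (w j : ℤ))
      rw [RingHom.mapMatrix_apply] at h
      have hm : (Matrix.vandermonde fun j => (w j : ℤ)).map (Int.castRingHom ℚ)
          = Matrix.vandermonde fun j => (w j : ℚ) := by
        ext i j
        simp [Matrix.vandermonde]
      rw [hm] at h
      exact h
    have hcN : ((F1z.coeff N : ℤ) : ℚ) = (F1 u ξ).coeff N := by
      rw [← hmap, Polynomial.coeff_map]
      simp
    have hprodinv : (∏ i ∈ Finset.range n, ((i.factorial : ℚ))⁻¹)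
        * (∏ i ∈ Finset.range n, (i.factorial : ℚ)) = 1 := by
      rw [← Finset.prod_mul_distrib]
      apply Finset.prod_eq_one
      intro i _
      exact inv_mul_cancel₀ (Nat.cast_ne_zero.mpr i.factorial_ne_zero)
    have heq : F1z.coeff N * ∏ i ∈ Finset.range n, (i.factorial : ℤ) = Vu * Vv := by
      have hQ : ((F1z.coeff N * ∏ i ∈ Finset.range n, (i.factorial : ℤ) : ℤ) : ℚ)
          = ((Vu * Vv : ℤ) : ℚ) := by
        push_cast
        rw [hcN, F1_coeff_N u ξ (p * p) hDlt hnD, ← hcastQ u, ← hcastQ ξ, ← hVu, ← hVv]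
        push_cast
        linear_combination ((Vu : ℚ) * (Vv : ℚ)) * hprodinv
      exact_mod_cast hQ
    have hpVuv : (p : ℤ) ∣ Vu * Vv := by
      have h := hpc.mul_right (∏ i ∈ Finset.range n, (i.factorial : ℤ))
      rwa [heq] at h
    have hprime : Prime (p : ℤ) := Int.prime_iff_natAbs_prime.mpr (by simpa using hp)
    have hvdm_ne : ∀ (y : Fin n → ZMod p), Function.Injective y →
        (Matrix.vandermonde y).det ≠ 0 := by
      intro y hy
      rw [Matrix.det_vandermonde]
      apply Finset.prod_ne_zero_iff.mpr
      intro i _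
      apply Finset.prod_ne_zero_iff.mpr
      intro j hj
      rw [Finset.mem_Ioi] at hj
      exact sub_ne_zero.mpr (fun hc => (ne_of_gt hj) (hy hc))
    have hcastZ : ∀ (w : Fin n → ℕ),
        (((Matrix.vandermonde fun j => (w j : ℤ)).det : ℤ) : ZMod p)
          = (Matrix.vandermonde fun j => ((w j : ℕ) : ZMod p)).det := by
      intro w
      have h := RingHom.map_det (Int.castRingHom (ZMod p))
        (Matrix.vandermonde fun j => (w j : ℤ))
      rw [RingHom.mapMatrix_apply] at h
      have hm : (Matrix.vandermonde fun j => (w j : ℤ)).map (Int.castRingHom (ZMod p))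
          = Matrix.vandermonde fun j => ((w j : ℕ) : ZMod p) := by
        ext i j
        simp [Matrix.vandermonde]
      rw [hm] at h
      exact h
    rcases hprime.dvd_mul.mp hpVuv with hdu | hdv
    · have h0 : ((Vu : ℤ) : ZMod p) = 0 := (ZMod.intCast_zmod_eq_zero_iff_dvd _ _).mpr hdu
      rw [hVu, hcastZ u] at h0
      have hinj : Function.Injective fun j => ((u j : ℕ) : ZMod p) := by
        have : (fun j => ((u j : ℕ) : ZMod p)) = x := funext fun j => hu_cast j
        rw [this]
        exact hx
      exact hvdm_ne _ hinj h0
    · have h0 : ((Vv : ℤ) : ZMod p) = 0 := (ZMod.intCast_zmod_eq_zero_iff_dvd _ _).mpr hdv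
      rw [hVv, hcastZ ξ] at h0
      have hinj : Function.Injective fun k => ((ξ k : ℕ) : ZMod p) := by
        intro a b hab
        apply hξ
        have ha := ZMod.val_cast_of_lt (hξp a)
        have hb := ZMod.val_cast_of_lt (hξp b)
        rw [← ha, ← hb]
        exact congrArg ZMod.val hab
      exact hvdm_ne _ hinj h0
  -- conclude linear independence
  have : LinearIndependent ℂ (fun j => A j) :=
    (Matrix.linearIndependent_rows_iff_isUnit (A := A)).mpr
      ((Matrix.isUnit_iff_isUnit_det A).mpr (isUnit_iff_ne_zero.mpr hdet))
  exact this
end
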